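/- arXiv:0909.2588 — 2 statements merged into one kernel-verified Lean document; each statement's English description precedes it below -/
import Mathlib

section
/- Let χ ∈ ℝ, τ > 0, and let w : [χ, ∞) → ℂ be a continuously differentiable function with w(χ) = 0 and w' square-integrable on [χ, ∞). Then ∫_χ^∞ |w(ρ)|² e^{-τρ} dρ ≤ (e^{-τχ}/τ²) ∫_χ^∞ |w'(ρ)|² dρ. -/
/-!
Since `w(χ) = 0`, the fundamental theorem of calculus and Cauchy–Schwarz give
`|w(ρ)|² ≤ (ρ - χ) ∫_χ^∞ |w'|²` for every `ρ ≥ χ`. Integrating this against the weight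
`e^{-τρ}` and using `∫_χ^∞ (ρ - χ) e^{-τρ} dρ = e^{-τχ}/τ²` yields the inequality.
-/

open MeasureTheory Filter Set Real Topology

theorem sq_integral_le_measureReal_univ_mul_integral_sq {α : Type*} [MeasurableSpace α]
    {μ : Measure α} [IsFiniteMeasure μ] {g : α → ℝ} (hg : 0 ≤ᵐ[μ] g) (hg2 : MemLp g 2 μ) :
    (∫ x, g x ∂μ) ^ 2 ≤ μ.real univ * ∫ x, g x ^ 2 ∂μ := by
  have holder := integral_mul_le_Lp_mul_Lq_of_nonneg Real.HolderConjugate.two_two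
    (ae_of_all _ fun _ => zero_le_one) hg (memLp_const (1 : ℝ)) (by simpa using hg2)
  simp only [one_mul, one_rpow, integral_const, smul_eq_mul, mul_one] at holder
  have hsq : ∫ x, g x ^ (2 : ℝ) ∂μ = ∫ x, g x ^ 2 ∂μ := by simp_rw [rpow_two]
  rw [hsq, ← sqrt_eq_rpow, ← sqrt_eq_rpow, ← sqrt_mul measureReal_nonneg] at holder
  exact (le_sqrt (integral_nonneg_of_ae hg) (by positivity)).1 holder

theorem norm_sq_le_mul_integral_norm_deriv_sq {E : Type*} [NormedAddCommGroup E]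
    [NormedSpace ℝ E] [CompleteSpace E] {f f' : ℝ → E} {a b : ℝ} (hab : a ≤ b)
    (hcont : ContinuousOn f (Icc a b)) (hderiv : ∀ x ∈ Ioo a b, HasDerivAt f (f' x) x)
    (hfa : f a = 0) (hf' : IntegrableOn (fun x => ‖f' x‖ ^ 2) (Ioc a b)) :
    ‖f b‖ ^ 2 ≤ (b - a) * ∫ x in a..b, ‖f' x‖ ^ 2 := by
  have hmeas : AEStronglyMeasurable f' (volume.restrict (Ioc a b)) := by
    rw [← Measure.restrict_congr_set Ioo_ae_eq_Ioc]
    exact (aestronglyMeasurable_deriv f _).congr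
      ((ae_restrict_iff' measurableSet_Ioo).2 (ae_of_all _ fun x hx => (hderiv x hx).deriv))
  have hL2 : MemLp f' 2 (volume.restrict (Ioc a b)) :=
    (memLp_two_iff_integrable_sq_norm hmeas).2 hf'
  have hftc : f b = ∫ x in a..b, f' x := by
    rw [intervalIntegral.integral_eq_sub_of_hasDerivAt_of_le hab hcont hderiv
      ((intervalIntegrable_iff_integrableOn_Ioc_of_le hab).2 (hL2.integrable one_le_two)),
      hfa, sub_zero]
  calc ‖f b‖ ^ 2 ≤ (∫ x in Ioc a b, ‖f' x‖) ^ 2 := by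
        rw [hftc, intervalIntegral.integral_of_le hab]
        exact pow_le_pow_left₀ (norm_nonneg _) (norm_integral_le_integral_norm _) 2
    _ ≤ (b - a) * ∫ x in a..b, ‖f' x‖ ^ 2 := by
        have := sq_integral_le_measureReal_univ_mul_integral_sq (ae_of_all _ fun x => norm_nonneg _)
          hL2.norm
        rw [intervalIntegral.integral_of_le hab]
        rwa [measureReal_restrict_apply_univ, volume_real_Ioc_of_le hab] at this

section Weight

variable {χ τ : ℝ}

theorem hasDerivAt_sub_mul_exp_neg_mul_antideriv (hτ : τ ≠ 0) (x : ℝ) :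
    HasDerivAt (fun ρ => -((τ * (ρ - χ) + 1) / τ ^ 2 * exp (-(τ * ρ))))
      ((x - χ) * exp (-(τ * x))) x := by
  have hlin : HasDerivAt (fun ρ => (τ * (ρ - χ) + 1) / τ ^ 2) (τ / τ ^ 2) x := by
    simpa using ((((hasDerivAt_id x).sub_const χ).const_mul τ).add_const 1).div_const (τ ^ 2)
  have hexp : HasDerivAt (fun ρ => exp (-(τ * ρ))) (exp (-(τ * x)) * -τ) x := by
    simpa using ((hasDerivAt_id x).const_mul τ).neg.exp
  refine (hlin.mul hexp).neg.congr_deriv ?_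
  field_simp
  ring

theorem tendsto_sub_mul_exp_neg_mul_antideriv (hτ : 0 < τ) :
    Tendsto (fun ρ => -((τ * (ρ - χ) + 1) / τ ^ 2 * exp (-(τ * ρ)))) atTop (𝓝 0) := by
  have hexp : Tendsto (fun ρ => exp (-(τ * ρ))) atTop (𝓝 0) :=
    tendsto_exp_neg_atTop_nhds_zero.comp (tendsto_id.const_mul_atTop hτ)
  have hmul : Tendsto (fun ρ => τ * ρ * exp (-(τ * ρ))) atTop (𝓝 0) := by
    simpa [Function.comp_def] using
      (tendsto_pow_mul_exp_neg_atTop_nhds_zero 1).comp (tendsto_id.const_mul_atTop hτ)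
  have := ((hmul.add (hexp.const_mul (1 - τ * χ))).div_const (τ ^ 2)).neg
  simp only [zero_add, mul_zero, zero_div, neg_zero] at this
  refine this.congr fun ρ => ?_
  ring

theorem sub_mul_exp_neg_mul_nonneg {ρ : ℝ} (hρ : ρ ∈ Ioi χ) : 0 ≤ (ρ - χ) * exp (-(τ * ρ)) :=
  mul_nonneg (sub_nonneg.2 (le_of_lt hρ)) (exp_pos _).le

theorem integrableOn_Ioi_sub_mul_exp_neg_mul (hτ : 0 < τ) :
    IntegrableOn (fun ρ => (ρ - χ) * exp (-(τ * ρ))) (Ioi χ) :=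
  integrableOn_Ioi_deriv_of_nonneg' (fun x _ => hasDerivAt_sub_mul_exp_neg_mul_antideriv hτ.ne' x)
    (fun _ => sub_mul_exp_neg_mul_nonneg) (tendsto_sub_mul_exp_neg_mul_antideriv hτ)

theorem integral_Ioi_sub_mul_exp_neg_mul (hτ : 0 < τ) :
    ∫ ρ in Ioi χ, (ρ - χ) * exp (-(τ * ρ)) = exp (-(τ * χ)) / τ ^ 2 := by
  rw [integral_Ioi_of_hasDerivAt_of_nonneg'
    (fun x _ => hasDerivAt_sub_mul_exp_neg_mul_antideriv hτ.ne' x)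
    (fun _ => sub_mul_exp_neg_mul_nonneg) (tendsto_sub_mul_exp_neg_mul_antideriv hτ)]
  ring

end Weight

theorem weighted_poincare_general (χ τ : ℝ) (hτ : 0 < τ) (w w' : ℝ → ℂ)
    (hderiv : ∀ ρ ∈ Set.Ici χ, HasDerivWithinAt w (w' ρ) (Set.Ici χ) ρ)
    (hw0 : w χ = 0)
    (hint : IntegrableOn (fun ρ => ‖w' ρ‖ ^ 2) (Set.Ici χ)) :
    ∫ ρ in Set.Ioi χ, ‖w ρ‖ ^ 2 * Real.exp (-(τ * ρ)) ≤
      (Real.exp (-(τ * χ)) / τ ^ 2) * ∫ ρ in Set.Ioi χ, ‖w' ρ‖ ^ 2 := by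
  set I := ∫ ρ in Ioi χ, ‖w' ρ‖ ^ 2
  have hpointwise : ∀ ρ ∈ Ioi χ, ‖w ρ‖ ^ 2 ≤ (ρ - χ) * I := by
    intro ρ hρ
    have hsub : Ioc χ ρ ⊆ Ioi χ := Ioc_subset_Ioi_self
    refine (norm_sq_le_mul_integral_norm_deriv_sq (le_of_lt hρ)
      (fun x hx => (hderiv x hx.1).continuousWithinAt.mono Icc_subset_Ici_self)
      (fun x hx => (hderiv x hx.1.le).hasDerivAt (Ici_mem_nhds hx.1)) hw0
      (hint.mono_set (hsub.trans Ioi_subset_Ici_self))).trans ?_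
    rw [intervalIntegral.integral_of_le (le_of_lt hρ)]
    exact mul_le_mul_of_nonneg_left (setIntegral_mono_set (hint.mono_set Ioi_subset_Ici_self)
      (ae_of_all _ fun _ => sq_nonneg _) hsub.eventuallyLE) (sub_nonneg.2 (le_of_lt hρ))
  calc ∫ ρ in Ioi χ, ‖w ρ‖ ^ 2 * exp (-(τ * ρ))
      ≤ ∫ ρ in Ioi χ, I * ((ρ - χ) * exp (-(τ * ρ))) := by
        refine integral_mono_of_nonneg (ae_of_all _ fun _ => by positivity)
          ((integrableOn_Ioi_sub_mul_exp_neg_mul hτ).const_mul I)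
          ((ae_restrict_iff' measurableSet_Ioi).2 (ae_of_all _ fun ρ hρ => ?_))
        dsimp only
        rw [mul_left_comm, ← mul_assoc]
        exact mul_le_mul_of_nonneg_right (hpointwise ρ hρ) (exp_pos _).le
    _ = exp (-(τ * χ)) / τ ^ 2 * I := by
        rw [integral_const_mul, integral_Ioi_sub_mul_exp_neg_mul hτ, mul_comm]

/-- Weighted Poincaré-type inequality (4.10) in Aronszajn's Carleman estimate. -/
theorem weighted_poincare (χ τ : ℝ) (hτ : 0 < τ) (w w' : ℝ → ℂ)
    (hderiv : ∀ ρ ∈ Set.Ici χ, HasDerivWithinAt w (w' ρ) (Set.Ici χ) ρ)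
    (hcont : ContinuousOn w' (Set.Ici χ))
    (hw0 : w χ = 0)
    (hint : IntegrableOn (fun ρ => ‖w' ρ‖ ^ 2) (Set.Ici χ)) :
    ∫ ρ in Set.Ioi χ, ‖w ρ‖ ^ 2 * Real.exp (-(τ * ρ)) ≤
      (Real.exp (-(τ * χ)) / τ ^ 2) * ∫ ρ in Set.Ioi χ, ‖w' ρ‖ ^ 2 :=
  weighted_poincare_general χ τ hτ w w' hderiv hw0 hint
end

section
/- Let H be a Hilbert space, A : W → H a self-adjoint operator with one-dimensional kernel spanned by a unit vector e, and suppose there is c > 0 with ‖A v‖ ≥ c ‖v‖ for all v ∈ W orthogonal to e. Let V : ℝ → W be a twice continuously differentiable solution of V'(s) + A V(s) = 0 such that ‖V(s) − P V(s)‖ → 0 as s → ±∞, where P is the orthogonal projection onto span(e). Then V(s) = a·e for some constant a ∈ ℝ; in particular the space of such solutions is one-dimensional. -/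
/-!
Write `a = ⟪V, e⟫` and `U = V - a e`. Since `A` is symmetric and `A e = 0`, the derivative
`V' = -A V` is orthogonal to `e`, so `a` is constant and `U' = -A U`. Symmetry of `A` then
gives `(‖U‖²)'' = 4 ‖U'‖² ≥ 0`: the function `‖U‖²` is convex, and as it tends to `0` at
both ends it vanishes identically.
-/

open RealInnerProductSpace Filter Topology Set

theorem ConvexOn.le_of_tendsto_atBot_atTop {f : ℝ → ℝ} {l : ℝ} (hf : ConvexOn ℝ univ f)
    (hbot : Tendsto f atBot (𝓝 l)) (htop : Tendsto f atTop (𝓝 l)) (x : ℝ) : f x ≤ l := by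
  have hmax : Tendsto (fun n : ℝ => max (f (x - n)) (f (x + n))) atTop (𝓝 l) := by
    have hleft := hbot.comp (tendsto_atBot_add_const_left atTop x tendsto_neg_atTop_atBot)
    simpa only [max_self, Function.comp_def, id, ← sub_eq_add_neg] using
      hleft.max (htop.comp (tendsto_atTop_add_const_left atTop x tendsto_id))
  refine ge_of_tendsto hmax (eventually_atTop.2 ⟨0, fun n hn => hf.le_on_segment trivial trivial ?_⟩)
  rw [segment_eq_Icc (by linarith)]
  constructor <;> linarith

section Flow

variable {H : Type*} [NormedAddCommGroup H] [InnerProductSpace ℝ H]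

/-- `⟪U s, F'⟫ = ‖F s‖²` is the symmetry relation differentiated in `t` at `t = s`. -/
theorem hasDerivAt_inner_of_inner_symm {U F : ℝ → H} {F' : H} {s : ℝ}
    (hU : HasDerivAt U (F s) s) (hF : HasDerivAt F F' s)
    (hsymm : ∀ t, ⟪U s, F t⟫ = ⟪F s, U t⟫) :
    HasDerivAt (fun t => ⟪U t, F t⟫) (2 * ‖F s‖ ^ 2) s := by
  have hleft := (hasDerivAt_const s (U s)).inner ℝ hF
  have hright := (hasDerivAt_const s (F s)).inner ℝ hU
  simp only [inner_zero_left, add_zero] at hleft hright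
  have hUF' : ⟪U s, F'⟫ = ⟪F s, F s⟫ := hleft.unique (by simpa only [hsymm] using hright)
  refine (hU.inner ℝ hF).congr_deriv ?_
  rw [hUF', real_inner_self_eq_norm_sq]
  ring

theorem eq_zero_of_inner_symm_of_tendsto {U F : ℝ → H} (hU : ∀ s, HasDerivAt U (F s) s)
    (hF : Differentiable ℝ F) (hsymm : ∀ s t, ⟪U s, F t⟫ = ⟪F s, U t⟫)
    (hbot : Tendsto (‖U ·‖) atBot (𝓝 0)) (htop : Tendsto (‖U ·‖) atTop (𝓝 0)) (s : ℝ) :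
    U s = 0 := by
  have hconvex : ConvexOn ℝ univ (‖U ·‖ ^ 2) := by
    refine convexOn_of_hasDerivWithinAt2_nonneg (f' := fun t => 2 * ⟪U t, F t⟫)
      (f'' := fun t => 2 * (2 * ‖F t‖ ^ 2)) convex_univ ?_ (fun t _ => ?_) (fun t _ => ?_)
      (fun t _ => by positivity)
    · exact (continuous_iff_continuousAt.2 fun t => (hU t).continuousAt).norm.pow 2
        |>.continuousOn
    · exact (hU t).norm_sq.hasDerivWithinAt
    · exact ((hasDerivAt_inner_of_inner_symm (hU t) (hF t).hasDerivAt (hsymm t)).const_mul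
        2).hasDerivWithinAt
  have hle := hconvex.le_of_tendsto_atBot_atTop (by simpa using hbot.pow 2)
    (by simpa using htop.pow 2) s
  simpa using hle

end Flow

section Symmetric

variable {H : Type*} [NormedAddCommGroup H] [InnerProductSpace ℝ H]
  {W : Submodule ℝ H} {A : W →ₗ[ℝ] H} (hsym : ∀ v w : W, ⟪A v, (w : H)⟫ = ⟪(v : H), A w⟫)
include hsym

theorem inner_map_eq_zero_of_map_eq_zero {k : W} (hk : A k = 0) (v : W) :
    ⟪A v, (k : H)⟫ = 0 := by
  rw [hsym, hk, inner_zero_right]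

theorem inner_sub_smul_map_symm {k : W} (hk : A k = 0) (v w : W) (a b : ℝ) :
    ⟪(v : H) - a • (k : H), A w⟫ = ⟪A v, (w : H) - b • (k : H)⟫ := by
  rw [inner_sub_left, inner_sub_right, real_inner_smul_left, real_inner_smul_right,
    real_inner_comm (A w) (k : H), inner_map_eq_zero_of_map_eq_zero hsym hk,
    inner_map_eq_zero_of_map_eq_zero hsym hk, hsym, mul_zero, mul_zero]

end Symmetric

theorem solutions_along_kernel_general
    {H : Type*} [NormedAddCommGroup H] [InnerProductSpace ℝ H]
    (W : Submodule ℝ H) (A : W →ₗ[ℝ] H)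
    (hsym : ∀ v w : W, ⟪A v, (w : H)⟫ = ⟪(v : H), A w⟫)
    (e : H) (heW : e ∈ W)
    (hker : ∀ v : W, A v = 0 ↔ ∃ a : ℝ, (v : H) = a • e)
    (V : ℝ → H) (hVW : ∀ s, V s ∈ W)
    (hV : ContDiff ℝ 2 V)
    (heqn : ∀ s, deriv V s + A ⟨V s, hVW s⟩ = 0)
    (hdecay_top : Filter.Tendsto (fun s => ‖V s - ⟪V s, e⟫ • e‖)
      Filter.atTop (nhds 0))
    (hdecay_bot : Filter.Tendsto (fun s => ‖V s - ⟪V s, e⟫ • e‖)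
      Filter.atBot (nhds 0)) :
    ∃ a : ℝ, ∀ s, V s = a • e := by
  have hAe : A ⟨e, heW⟩ = 0 := (hker _).2 ⟨1, (one_smul ℝ e).symm⟩
  have hderiv (s : ℝ) : deriv V s = -A ⟨V s, hVW s⟩ := eq_neg_of_add_eq_zero_left (heqn s)
  have hVdiff : ∀ s, HasDerivAt V (deriv V s) s :=
    fun s => (hV.differentiable two_ne_zero s).hasDerivAt
  have hV'diff : Differentiable ℝ (deriv V) := hV.differentiable_deriv_two
  obtain ⟨a, ha⟩ : ∃ a : ℝ, ∀ s, ⟪V s, e⟫ = a := by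
    have hcoeff (s : ℝ) : HasDerivAt (fun t => ⟪V t, e⟫) 0 s := by
      refine ((hVdiff s).inner ℝ (hasDerivAt_const s e)).congr_deriv ?_
      rw [hderiv, inner_zero_right, inner_neg_left,
        inner_map_eq_zero_of_map_eq_zero hsym hAe, neg_zero, zero_add]
    exact ⟨_, fun s => is_const_of_deriv_eq_zero (fun t => (hcoeff t).differentiableAt)
      (fun t => (hcoeff t).deriv) s 0⟩
  simp only [ha] at hdecay_top hdecay_bot
  refine ⟨a, fun s => sub_eq_zero.1 <| eq_zero_of_inner_symm_of_tendsto (F := deriv V)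
    (fun t => (hVdiff t).sub_const _) hV'diff (fun t u => ?_) hdecay_bot hdecay_top s⟩
  simpa only [hderiv, inner_neg_left, inner_neg_right, neg_inj] using
    inner_sub_smul_map_symm hsym hAe ⟨V t, hVW t⟩ ⟨V u, hVW u⟩ a a

/-- Abstract form of Case 1 in the proof of Theorem 7.1: a bounded solution of
`V' + AV = 0` which is asymptotic to the one-dimensional kernel of the
self-adjoint operator `A` at `±∞` is a constant multiple of the kernel
generator. -/
theorem solutions_along_kernel
    {H : Type*} [NormedAddCommGroup H] [InnerProductSpace ℝ H] [CompleteSpace H]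
    (W : Submodule ℝ H) (A : W →ₗ[ℝ] H)
    (hsym : ∀ v w : W, ⟪A v, (w : H)⟫ = ⟪(v : H), A w⟫)
    (e : H) (heW : e ∈ W) (hnorm : ‖e‖ = 1)
    (hker : ∀ v : W, A v = 0 ↔ ∃ a : ℝ, (v : H) = a • e)
    (c : ℝ) (hc : 0 < c)
    (hbound : ∀ v : W, ⟪(v : H), e⟫ = 0 → c * ‖(v : H)‖ ≤ ‖A v‖)
    (V : ℝ → H) (hVW : ∀ s, V s ∈ W)
    (hV : ContDiff ℝ 2 V)
    (heqn : ∀ s, deriv V s + A ⟨V s, hVW s⟩ = 0)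
    (hdecay_top : Filter.Tendsto (fun s => ‖V s - ⟪V s, e⟫ • e‖)
      Filter.atTop (nhds 0))
    (hdecay_bot : Filter.Tendsto (fun s => ‖V s - ⟪V s, e⟫ • e‖)
      Filter.atBot (nhds 0)) :
    ∃ a : ℝ, ∀ s, V s = a • e :=
  solutions_along_kernel_general W A hsym e heW hker V hVW hV heqn hdecay_top hdecay_bot
end
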